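/- arXiv:0902.0549 — 3 statements merged into one kernel-verified Lean document; each statement's English description precedes it below -/
import Mathlib

section
/- The Clifford algebra C(p,q,z) decomposes as a vector space direct sum C = C(p,q) ⊕ R, where C(p,q) is the subalgebra generated by {e_λ : λ ∈ P ∪ M} and R is the ideal generated by {e_λ : λ ∈ Z}. -/
open Classical in
/-- The weight of generator `i`: `1` on `P`, `-1` on `M`, `0` elsewhere. -/
noncomputable def cliffordWeight {ι : Type} (P M : Set ι) (i : ι) : ℝ :=
  if i ∈ P then 1 else if i ∈ M then -1 else 0

/-- The diagonal bilinear form `B(x,y) = ∑ i, w i * x i * y i` on `ι →₀ ℝ`. -/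
noncomputable def cliffordBilin {ι : Type} (P M : Set ι) :
    (ι →₀ ℝ) →ₗ[ℝ] (ι →₀ ℝ) →ₗ[ℝ] ℝ :=
  Finsupp.lsum ℝ fun i =>
    LinearMap.toSpanSingleton ℝ ((ι →₀ ℝ) →ₗ[ℝ] ℝ) (cliffordWeight P M i • Finsupp.lapply i)

/-- The quadratic form of `C(p,q,z)`. -/
noncomputable def cliffordQ {ι : Type} (P M : Set ι) : QuadraticForm ℝ (ι →₀ ℝ) :=
  LinearMap.BilinMap.toQuadraticMap (cliffordBilin P M)

/-- The Clifford algebra `C(p,q,z)` (`Z` is the complement of `P ∪ M` in `ι`). -/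
noncomputable abbrev Cl {ι : Type} (P M : Set ι) := CliffordAlgebra (cliffordQ P M)

/-- The generator `e_i` of `C(p,q,z)`. -/
noncomputable def gen {ι : Type} (P M : Set ι) (i : ι) : Cl P M :=
  CliffordAlgebra.ι (cliffordQ P M) (Finsupp.single i 1)

/-- The product `e_I` over a finite ordered subset `I`. -/
noncomputable def prodGen {ι : Type} [LinearOrder ι] (P M : Set ι) (s : Finset ι) : Cl P M :=
  ((s.sort (· ≤ ·)).map (gen P M)).prod

/-- The subalgebra `C(p,q)` generated by the `e_λ`, `λ ∈ P ∪ M`. -/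
noncomputable def Cpq {ι : Type} (P M : Set ι) : Subalgebra ℝ (Cl P M) :=
  Algebra.adjoin ℝ (gen P M '' (P ∪ M))

/-- The ideal generated by the nilpotent generators `e_λ`, `λ ∈ Z`. -/
noncomputable def nilGenIdeal {ι : Type} (P M Z : Set ι) : TwoSidedIdeal (Cl P M) :=
  TwoSidedIdeal.span (gen P M '' Z)

/-- The nil radical of a ring: the supremum (sum) of all nil two-sided ideals. -/
def nilRad (A : Type*) [Ring A] : TwoSidedIdeal A :=
  sSup {I : TwoSidedIdeal A | ∀ x ∈ I, IsNilpotent x}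

/-- A two-sided ideal `I` is nilpotent: `Iⁿ = 0`, phrased via products of `n` elements. -/
def TwoSidedIdeal.IsNilpotentIdeal {A : Type*} [Ring A] (I : TwoSidedIdeal A) : Prop :=
  ∃ n : ℕ, 0 < n ∧ ∀ l : List A, l.length = n → (∀ x ∈ l, x ∈ I) → l.prod = 0

/-- A two-sided ideal is prime. -/
def TwoSidedIdeal.IsPrimeIdeal {A : Type*} [Ring A] (I : TwoSidedIdeal A) : Prop :=
  I ≠ ⊤ ∧ ∀ J K : TwoSidedIdeal A, (∀ a ∈ J, ∀ b ∈ K, a * b ∈ I) → J ≤ I ∨ K ≤ I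

/-! The coordinate projection of `ι →₀ ℝ` onto `P ∪ M` preserves the quadratic form, since the
weights vanish off `P ∪ M`. It therefore induces an algebra endomorphism `π` of `C(p,q,z)` that
fixes `e_λ` for `λ ∈ P ∪ M` and kills `e_λ` for `λ ∈ Z`. So `π` is a projection onto `C(p,q)`,
`R ⊆ ker π`, and `x - π x ∈ R` for every `x` (induction on `x`, using that `R` is an ideal);
hence `ker π = R`. -/

open Finsupp

section
variable {ι : Type} (P M : Set ι)

lemma cliffordBilin_apply (x y : ι →₀ ℝ) :
    cliffordBilin P M x y = ∑ i ∈ x.support, x i * cliffordWeight P M i * y i := by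
  simp [cliffordBilin, Finsupp.sum, mul_assoc]

lemma cliffordWeight_mul_eq_zero {v : ι →₀ ℝ} (hv : v ∈ supported ℝ ℝ (P ∪ M)ᶜ) (i : ι) :
    cliffordWeight P M i * v i = 0 := by
  by_cases hi : i ∈ P ∪ M
  · rw [(mem_supported' ℝ v).1 hv i (not_not.2 hi), mul_zero]
  · rw [Set.mem_union, not_or] at hi
    simp [cliffordWeight, hi.1, hi.2]

lemma cliffordBilin_eq_zero_left {x : ι →₀ ℝ} (hx : x ∈ supported ℝ ℝ (P ∪ M)ᶜ)
    (y : ι →₀ ℝ) : cliffordBilin P M x y = 0 := by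
  rw [cliffordBilin_apply]
  exact Finset.sum_eq_zero fun i _ => by
    rw [mul_comm (x i), cliffordWeight_mul_eq_zero P M hx, zero_mul]

lemma cliffordBilin_eq_zero_right (x : ι →₀ ℝ) {y : ι →₀ ℝ}
    (hy : y ∈ supported ℝ ℝ (P ∪ M)ᶜ) : cliffordBilin P M x y = 0 := by
  rw [cliffordBilin_apply]
  exact Finset.sum_eq_zero fun i _ => by
    rw [mul_assoc, cliffordWeight_mul_eq_zero P M hy, mul_zero]

open Classical in
lemma cliffordQ_filter (v : ι →₀ ℝ) :
    cliffordQ P M (v.filter (· ∈ P ∪ M)) = cliffordQ P M v := by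
  have hneg : v.filter (· ∉ P ∪ M) ∈ supported ℝ ℝ (P ∪ M)ᶜ :=
    (restrictDom ℝ ℝ (P ∪ M)ᶜ v).2
  conv_rhs => rw [← filter_add_filter_not v (· ∈ P ∪ M)]
  simp only [cliffordQ, LinearMap.BilinMap.toQuadraticMap_apply, map_add, LinearMap.add_apply,
    cliffordBilin_eq_zero_left P M hneg, cliffordBilin_eq_zero_right P M _ hneg, add_zero]

open Classical in
noncomputable def cpqProj : Cl P M →ₐ[ℝ] Cl P M :=
  CliffordAlgebra.map
    { toLinearMap := (supported ℝ ℝ (P ∪ M)).subtype ∘ₗ restrictDom ℝ ℝ (P ∪ M)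
      map_app' := cliffordQ_filter P M }

open Classical in
lemma cpqProj_ι (v : ι →₀ ℝ) :
    cpqProj P M (CliffordAlgebra.ι _ v) = CliffordAlgebra.ι _ (v.filter (· ∈ P ∪ M)) :=
  CliffordAlgebra.map_apply_ι _ v

lemma cpqProj_gen_of_mem {i : ι} (hi : i ∈ P ∪ M) : cpqProj P M (gen P M i) = gen P M i := by
  classical
  rw [gen, cpqProj_ι, filter_single_of_pos _ hi]

lemma cpqProj_gen_of_notMem {i : ι} (hi : i ∉ P ∪ M) : cpqProj P M (gen P M i) = 0 := by
  classical
  rw [gen, cpqProj_ι, filter_single_of_neg _ hi, map_zero]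

lemma ι_mem_Cpq {v : ι →₀ ℝ} (hv : v ∈ supported ℝ ℝ (P ∪ M)) :
    CliffordAlgebra.ι _ v ∈ Cpq P M := by
  rw [supported_eq_span_single] at hv
  refine (Submodule.span_le (p := (Cpq P M).toSubmodule.comap (CliffordAlgebra.ι _))).2 ?_ hv
  rintro _ ⟨i, hi, rfl⟩
  exact Algebra.subset_adjoin ⟨i, hi, rfl⟩

lemma cpqProj_mem_Cpq (x : Cl P M) : cpqProj P M x ∈ Cpq P M := by
  classical
  induction x using CliffordAlgebra.induction with
  | algebraMap r => rw [AlgHom.commutes]; exact Subalgebra.algebraMap_mem _ r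
  | ι v => rw [cpqProj_ι]; exact ι_mem_Cpq P M (restrictDom ℝ ℝ (P ∪ M) v).2
  | mul x y hx hy => rw [map_mul]; exact Subalgebra.mul_mem _ hx hy
  | add x y hx hy => rw [map_add]; exact Subalgebra.add_mem _ hx hy

lemma cpqProj_eq_self {x : Cl P M} (hx : x ∈ Cpq P M) : cpqProj P M x = x := by
  suffices Cpq P M ≤ AlgHom.equalizer (cpqProj P M) (AlgHom.id ℝ _) from this hx
  refine Algebra.adjoin_le ?_
  rintro _ ⟨i, hi, rfl⟩
  exact cpqProj_gen_of_mem P M hi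

variable (Z : Set ι)

lemma ι_mem_nilGenIdeal {v : ι →₀ ℝ} (hv : v ∈ supported ℝ ℝ Z) :
    CliffordAlgebra.ι _ v ∈ nilGenIdeal P M Z := by
  rw [supported_eq_span_single] at hv
  induction hv using Submodule.span_induction with
  | mem _ h => obtain ⟨i, hi, rfl⟩ := h; exact TwoSidedIdeal.subset_span ⟨i, hi, rfl⟩
  | zero => rw [map_zero]; exact TwoSidedIdeal.zero_mem _
  | add _ _ _ _ hx hy => rw [map_add]; exact TwoSidedIdeal.add_mem _ hx hy
  | smul r _ _ h => rw [map_smul, Algebra.smul_def]; exact TwoSidedIdeal.mul_mem_left _ _ _ h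

lemma sub_cpqProj_mem_nilGenIdeal (hZ : (P ∪ M)ᶜ ⊆ Z) (x : Cl P M) :
    x - cpqProj P M x ∈ nilGenIdeal P M Z := by
  classical
  induction x using CliffordAlgebra.induction with
  | algebraMap r => rw [AlgHom.commutes, sub_self]; exact TwoSidedIdeal.zero_mem _
  | ι v =>
    rw [cpqProj_ι, ← map_sub, ← eq_sub_of_add_eq' (filter_add_filter_not v _)]
    exact ι_mem_nilGenIdeal P M Z (supported_mono hZ (restrictDom ℝ ℝ (P ∪ M)ᶜ v).2)
  | mul x y hx hy =>
    rw [show x * y - cpqProj P M (x * y) =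
        (x - cpqProj P M x) * y + cpqProj P M x * (y - cpqProj P M y) by
      rw [map_mul]; noncomm_ring]
    exact TwoSidedIdeal.add_mem _ (TwoSidedIdeal.mul_mem_right _ _ _ hx)
      (TwoSidedIdeal.mul_mem_left _ _ _ hy)
  | add x y hx hy =>
    rw [map_add, add_sub_add_comm]
    exact TwoSidedIdeal.add_mem _ hx hy

lemma nilGenIdeal_le_ker (hZ : Disjoint (P ∪ M) Z) :
    nilGenIdeal P M Z ≤ TwoSidedIdeal.ker (cpqProj P M) := by
  refine TwoSidedIdeal.span_le.2 ?_
  rintro _ ⟨i, hi, rfl⟩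
  exact (TwoSidedIdeal.mem_ker _).2 (cpqProj_gen_of_notMem P M (hZ.notMem_of_mem_right hi))

end

theorem clifford_vectorSpace_decomposition_general {ι : Type} (P M Z : Set ι)
    (hPZ : Disjoint P Z) (hMZ : Disjoint M Z)
    (hU : P ∪ M ∪ Z = Set.univ) :
    IsCompl (Cpq P M).toSubmodule
      (Submodule.span ℝ (nilGenIdeal P M Z : Set (Cl P M))) := by
  have hZ : (P ∪ M)ᶜ ⊆ Z := fun i hi => (hU ▸ Set.mem_univ i : i ∈ P ∪ M ∪ Z).resolve_left hi
  let π := (cpqProj P M).toLinearMap.codRestrict (Cpq P M).toSubmodule (cpqProj_mem_Cpq P M)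
  have hker : LinearMap.ker π = Submodule.span ℝ (nilGenIdeal P M Z : Set (Cl P M)) := by
    refine le_antisymm (fun x hx => Submodule.subset_span ?_) (Submodule.span_le.2 fun x hx => ?_)
    · have hx0 : cpqProj P M x = 0 := congrArg Subtype.val hx
      simpa [hx0] using sub_cpqProj_mem_nilGenIdeal P M Z hZ x
    · have hx0 := nilGenIdeal_le_ker P M Z (hPZ.union_left hMZ) hx
      exact Subtype.ext ((TwoSidedIdeal.mem_ker (cpqProj P M)).1 hx0)
  rw [← hker]
  exact LinearMap.isCompl_of_proj fun x => Subtype.ext (cpqProj_eq_self P M x.2)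

/-- `C(p,q,z) = C(p,q) ⊕ R` as real vector spaces, where `C(p,q)` is the
subalgebra generated by `{e_λ : λ ∈ P ∪ M}` and `R` is the ideal generated by
`{e_λ : λ ∈ Z}`. -/
theorem clifford_vectorSpace_decomposition {ι : Type} (P M Z : Set ι)
    (hPM : Disjoint P M) (hPZ : Disjoint P Z) (hMZ : Disjoint M Z)
    (hU : P ∪ M ∪ Z = Set.univ) :
    IsCompl (Cpq P M).toSubmodule
      (Submodule.span ℝ (nilGenIdeal P M Z : Set (Cl P M))) :=
  clifford_vectorSpace_decomposition_general P M Z hPZ hMZ hU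
end

section
/- If the subalgebra C(p,q) of the Clifford algebra C = C(p,q,z) is simple, then every non-trivial two-sided ideal I of C is contained in the nil radical R. -/
/-!
Modulo `R` every element of `C(p,q,z)` is congruent to an element of `C(p,q)`: kill the generators
`e_λ`, `λ ∈ Z`. Each such generator squares to zero and satisfies `x e_λ = e_λ x̂` (`x̂` the grade
involution), so the ideal spanned by finitely many of them is nil, hence `R` is a nil ideal.
If `I` is proper, so is `I + R`, since `1 - r` is a unit for nilpotent `r`; its trace on the simple
ring `C(p,q)` is therefore zero. Writing `x ∈ I` as `y + r` with `y ∈ C(p,q)` and `r ∈ R` puts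
`y` in that trace, so `y = 0` and `x ∈ R`.
-/

namespace TwoSidedIdeal

variable {A : Type*} [Ring A]

lemma exists_finset_subset_mem_span {s : Set A} {x : A} (hx : x ∈ span s) :
    ∃ t : Finset A, ↑t ⊆ s ∧ x ∈ span (t : Set A) := by
  classical
  induction hx using span_induction with
  | mem x hx => exact ⟨{x}, by simpa using hx, subset_span (by simp)⟩
  | zero => exact ⟨∅, by simp, zero_mem _⟩
  | add x y _ _ hx hy =>
    obtain ⟨t, hts, hxt⟩ := hx
    obtain ⟨u, hus, hyu⟩ := hy
    refine ⟨t ∪ u, by simp [hts, hus], add_mem _ ?_ ?_⟩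
    · exact span_mono (by simp) hxt
    · exact span_mono (by simp) hyu
  | neg x _ hx =>
    obtain ⟨t, hts, hxt⟩ := hx
    exact ⟨t, hts, neg_mem _ hxt⟩
  | left_absorb a x _ hx =>
    obtain ⟨t, hts, hxt⟩ := hx
    exact ⟨t, hts, mul_mem_left _ a x hxt⟩
  | right_absorb b x _ hx =>
    obtain ⟨t, hts, hxt⟩ := hx
    exact ⟨t, hts, mul_mem_right _ x b hxt⟩

lemma exists_eq_mul_of_mem_span_singleton {e a : A} (he : ∀ x, ∃ y, x * e = e * y)
    (ha : a ∈ span {e}) : ∃ y, a = e * y := by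
  induction ha using span_induction with
  | mem x hx => exact ⟨1, by rw [Set.mem_singleton_iff.mp hx, mul_one]⟩
  | zero => exact ⟨0, (mul_zero e).symm⟩
  | add x y _ _ hx hy =>
    obtain ⟨u, rfl⟩ := hx
    obtain ⟨v, rfl⟩ := hy
    exact ⟨u + v, (mul_add e u v).symm⟩
  | neg x _ hx =>
    obtain ⟨u, rfl⟩ := hx
    exact ⟨-u, (mul_neg e u).symm⟩
  | left_absorb b x _ hx =>
    obtain ⟨u, rfl⟩ := hx
    obtain ⟨v, hv⟩ := he b
    exact ⟨v * u, by rw [← mul_assoc, hv, mul_assoc]⟩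
  | right_absorb b x _ hx =>
    obtain ⟨u, rfl⟩ := hx
    exact ⟨u * b, mul_assoc e u b⟩

lemma mul_self_eq_zero_of_mem_span_singleton {e a : A} (he₀ : e * e = 0)
    (he : ∀ x, ∃ y, x * e = e * y) (ha : a ∈ span {e}) : a * a = 0 := by
  obtain ⟨y, rfl⟩ := exists_eq_mul_of_mem_span_singleton he ha
  obtain ⟨z, hz⟩ := he y
  calc e * y * (e * y) = e * (y * e) * y := by simp only [mul_assoc]
    _ = 0 := by rw [hz, ← mul_assoc, he₀, zero_mul, zero_mul]

lemma isNilpotent_of_sub_mem {J : TwoSidedIdeal A} (hJ : ∀ a ∈ J, IsNilpotent a) {r b : A}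
    (h : r - b ∈ J) (hb : IsNilpotent b) : IsNilpotent r := by
  obtain ⟨k, hk⟩ := hb
  have hrk : r ^ k ∈ J := by
    have := J.ringCon.toCon.pow k ((rel_iff J r b).mpr h)
    simpa [hk] using (rel_iff J _ _).mp this
  exact (hJ _ hrk).of_pow

theorem isNilpotent_of_mem_span {s : Set A}
    (hs : ∀ e ∈ s, e * e = 0 ∧ ∀ x, ∃ y, x * e = e * y) {r : A} (hr : r ∈ span s) :
    IsNilpotent r := by
  classical
  obtain ⟨t, hts, hrt⟩ := exists_finset_subset_mem_span hr
  clear hr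
  induction t using Finset.induction_on generalizing r with
  | empty => exact ⟨1, by simpa using (mem_span_iff.mp hrt ⊥ (by simp))⟩
  | insert e t _ ih =>
    obtain ⟨he₀, he⟩ := hs e (hts (Finset.mem_insert_self e t))
    have hsup : span (↑(insert e t) : Set A) ≤ span {e} ⊔ span ↑t := by
      rw [span_le, Finset.coe_insert, Set.insert_subset_iff]
      exact ⟨mem_sup_left (subset_span rfl), fun x hx => mem_sup_right (subset_span hx)⟩
    obtain ⟨a, ha, b, hb, rfl⟩ := mem_sup.mp (hsup hrt)
    refine isNilpotent_of_sub_mem (J := span {e}) (b := b)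
      (fun a ha => ⟨2, by rw [sq, mul_self_eq_zero_of_mem_span_singleton he₀ he ha]⟩)
      (by simpa using ha) (ih (fun x hx => hts (Finset.mem_insert_of_mem hx)) hb)

lemma sup_ne_top_of_isNilpotent {I J : TwoSidedIdeal A} (hI : I ≠ ⊤)
    (hJ : ∀ x ∈ J, IsNilpotent x) : I ⊔ J ≠ ⊤ := by
  intro htop
  obtain ⟨a, ha, b, hb, hab⟩ := mem_sup.mp (htop ▸ mem_top A : (1 : A) ∈ I ⊔ J)
  obtain ⟨u, hu⟩ : IsUnit a := by simpa [← hab] using (hJ b hb).isUnit_one_sub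
  apply hI
  rw [← one_mem_iff]
  simpa [← hu] using I.mul_mem_left (↑u⁻¹ : A) a (hu ▸ ha)

lemma eq_zero_of_map_mem {S : Type*} [Ring S] [IsSimpleRing S] (f : S →+* A)
    {J : TwoSidedIdeal A} (hJ : J ≠ ⊤) {y : S} (hy : f y ∈ J) : y = 0 := by
  rcases eq_bot_or_eq_top (J.comap f) with h | h
  · rw [← mem_bot, ← h, mem_comap]
    exact hy
  · have h1 : (1 : S) ∈ J.comap f := h ▸ mem_top S
    rw [mem_comap, map_one, one_mem_iff] at h1
    exact absurd h1 hJ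

theorem le_of_isSimpleRing {S : Type*} [Ring S] [IsSimpleRing S] (f : S →+* A)
    {R : TwoSidedIdeal A} (hR : ∀ x ∈ R, IsNilpotent x) (hf : ∀ x, ∃ y, x - f y ∈ R)
    {I : TwoSidedIdeal A} (hI : I ≠ ⊤) : I ≤ R := by
  intro x hx
  obtain ⟨y, hy⟩ := hf x
  have hy₀ : y = 0 := by
    refine eq_zero_of_map_mem f (sup_ne_top_of_isNilpotent hI hR) ?_
    simpa using _root_.sub_mem (mem_sup_left hx) (mem_sup_right hy)
  simpa [hy₀] using hy

end TwoSidedIdeal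

section Clifford

variable {ι : Type} {P M : Set ι}

lemma cliffordBilin_single_left (i : ι) (a : ℝ) (v : ι →₀ ℝ) :
    cliffordBilin P M (Finsupp.single i a) v = a * cliffordWeight P M i * v i := by
  simp [cliffordBilin, mul_assoc]

lemma cliffordBilin_single_right (v : ι →₀ ℝ) (i : ι) (a : ℝ) :
    cliffordBilin P M v (Finsupp.single i a) = v i * cliffordWeight P M i * a := by
  induction v using Finsupp.induction_linear with
  | zero => simp
  | add v w hv hw => simp only [map_add, LinearMap.add_apply, hv, hw, Finsupp.add_apply]; ring
  | single j b =>
    rw [cliffordBilin_single_left]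
    rcases eq_or_ne j i with rfl | h
    · simp
    · simp [h, h.symm]

lemma ι_single_eq_smul_gen (i : ι) (a : ℝ) :
    CliffordAlgebra.ι (cliffordQ P M) (Finsupp.single i a) = a • gen P M i := by
  rw [gen, ← map_smul, Finsupp.smul_single_one]

lemma gen_mul_self (i : ι) : gen P M i * gen P M i = algebraMap ℝ _ (cliffordWeight P M i) := by
  rw [gen, CliffordAlgebra.ι_sq_scalar]
  congr 1
  simp [cliffordQ, cliffordBilin_single_left]

variable {i : ι}

lemma mul_gen_eq_gen_mul_involute (hi : cliffordWeight P M i = 0) (x : Cl P M) :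
    x * gen P M i = gen P M i * CliffordAlgebra.involute x := by
  induction x using CliffordAlgebra.induction with
  | algebraMap r => rw [AlgHom.commutes, Algebra.commutes]
  | ι v =>
    have hpolar : QuadraticMap.polar (cliffordQ P M) v (Finsupp.single i 1) = 0 := by
      rw [cliffordQ, LinearMap.BilinMap.polar_toQuadraticMap, cliffordBilin_single_left,
        cliffordBilin_single_right, hi]
      ring
    have := CliffordAlgebra.ι_mul_ι_add_swap (Q := cliffordQ P M) v (Finsupp.single i 1)
    rw [hpolar, map_zero] at this
    rw [CliffordAlgebra.involute_ι, mul_neg, gen, eq_neg_iff_add_eq_zero, this]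
  | mul a b ha hb => rw [mul_assoc, hb, ← mul_assoc, ha, map_mul, mul_assoc]
  | add a b ha hb => rw [add_mul, ha, hb, map_add, mul_add]

lemma cliffordWeight_eq_zero (hP : i ∉ P) (hM : i ∉ M) : cliffordWeight P M i = 0 := by
  simp [cliffordWeight, hP, hM]

variable {Z : Set ι}

lemma isNilpotent_of_mem_nilGenIdeal (hPZ : Disjoint P Z) (hMZ : Disjoint M Z) {r : Cl P M}
    (hr : r ∈ nilGenIdeal P M Z) : IsNilpotent r := by
  refine TwoSidedIdeal.isNilpotent_of_mem_span ?_ hr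
  rintro _ ⟨i, hi, rfl⟩
  have hw := cliffordWeight_eq_zero (hPZ.notMem_of_mem_right hi) (hMZ.notMem_of_mem_right hi)
  exact ⟨by rw [gen_mul_self, hw, map_zero], fun x => ⟨_, mul_gen_eq_gen_mul_involute hw x⟩⟩

lemma exists_sub_mem_nilGenIdeal (hU : P ∪ M ∪ Z = Set.univ) (x : Cl P M) :
    ∃ y ∈ Cpq P M, x - y ∈ nilGenIdeal P M Z := by
  induction x using CliffordAlgebra.induction with
  | algebraMap r => exact ⟨algebraMap ℝ _ r, (Cpq P M).algebraMap_mem r, by simp⟩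
  | ι v =>
    induction v using Finsupp.induction_linear with
    | zero => exact ⟨0, zero_mem _, by simp⟩
    | add v w hv hw =>
      obtain ⟨y, hy, hvy⟩ := hv
      obtain ⟨z, hz, hwz⟩ := hw
      refine ⟨y + z, add_mem hy hz, ?_⟩
      rw [map_add, add_sub_add_comm]
      exact add_mem hvy hwz
    | single i a =>
      rw [ι_single_eq_smul_gen]
      by_cases hi : i ∈ P ∪ M
      · exact ⟨a • gen P M i, (Cpq P M).smul_mem (Algebra.subset_adjoin ⟨i, hi, rfl⟩) a,
          by simp⟩
      · have hiZ : i ∈ Z := ((hU ▸ Set.mem_univ i : i ∈ P ∪ M ∪ Z)).resolve_left hi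
        refine ⟨0, zero_mem _, ?_⟩
        rw [sub_zero, Algebra.smul_def]
        exact TwoSidedIdeal.mul_mem_left _ _ _ (TwoSidedIdeal.subset_span ⟨i, hiZ, rfl⟩)
  | mul a b ha hb =>
    obtain ⟨y, hy, hay⟩ := ha
    obtain ⟨z, hz, hbz⟩ := hb
    refine ⟨y * z, mul_mem hy hz, ?_⟩
    rw [show a * b - y * z = (a - y) * b + y * (b - z) by noncomm_ring]
    exact add_mem (TwoSidedIdeal.mul_mem_right _ _ _ hay) (TwoSidedIdeal.mul_mem_left _ _ _ hbz)
  | add a b ha hb =>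
    obtain ⟨y, hy, hay⟩ := ha
    obtain ⟨z, hz, hbz⟩ := hb
    refine ⟨y + z, add_mem hy hz, ?_⟩
    rw [add_sub_add_comm]
    exact add_mem hay hbz

end Clifford

theorem ideal_le_nilradical_of_simple_general {ι : Type} (P M Z : Set ι)
    (hPZ : Disjoint P Z) (hMZ : Disjoint M Z)
    (hU : P ∪ M ∪ Z = Set.univ)
    (hs : IsSimpleRing (Cpq P M))
    (I : TwoSidedIdeal (Cl P M)) (hIt : I ≠ ⊤) :
    I ≤ nilGenIdeal P M Z := by
  refine TwoSidedIdeal.le_of_isSimpleRing (Cpq P M).val.toRingHom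
    (fun _ => isNilpotent_of_mem_nilGenIdeal hPZ hMZ) (fun x => ?_) hIt
  obtain ⟨y, hy, hxy⟩ := exists_sub_mem_nilGenIdeal hU x
  exact ⟨⟨y, hy⟩, hxy⟩

/-- if `C(p,q)` is simple then every non-trivial two-sided ideal of
`C(p,q,z)` is contained in the nil radical `R`. -/
theorem ideal_le_nilradical_of_simple {ι : Type} (P M Z : Set ι)
    (hPM : Disjoint P M) (hPZ : Disjoint P Z) (hMZ : Disjoint M Z)
    (hU : P ∪ M ∪ Z = Set.univ)
    (hs : IsSimpleRing (Cpq P M))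
    (I : TwoSidedIdeal (Cl P M)) (hI0 : I ≠ ⊥) (hIt : I ≠ ⊤) :
    I ≤ nilGenIdeal P M Z :=
  ideal_le_nilradical_of_simple_general P M Z hPZ hMZ hU hs I hIt
end

section
/- The Clifford algebra C = C(p,q,z) is left Noetherian if and only if both p + q < ∞ and z < ∞. -/
/-!
If `ι` is finite, `C` is finite-dimensional over `ℝ` (it is linearly isomorphic to the exterior
algebra), hence Noetherian.

Conversely, sequences with `x k * y n = 0` for `k < n` but `x n * y n ≠ 0` give the strictly
increasing chain of left ideals `C x₀ + ⋯ + C xₙ₋₁`. For infinitely many generators of square `0`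
take `x k = e_k` and `y n = e₀ ⋯ eₙ₋₁`. For infinitely many generators of square `ε = ±1`, group
them into blocks of four: the block products `u k` are commuting involutions, and one takes
`x k = 1 - u k`, `y n = (1 + u₀) ⋯ (1 + uₙ₋₁)`. The needed non-vanishing is detected by the
contractions with the coordinate functionals, which strip a leading generator `e_i` off a product
of distinct generators.
-/

theorem not_isNoetherianRing_of_mul_eq_zero {A : Type*} [Ring A] (x y : ℕ → A)
    (hlt : ∀ k n, k < n → x k * y n = 0) (hne : ∀ n, x n * y n ≠ 0) :
    ¬ IsNoetherianRing A := by
  intro _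
  let I : ℕ → Submodule A A := fun n => Submodule.span A (x '' Set.Iio n)
  have hI : StrictMono I := by
    refine strictMono_nat_of_lt_succ fun n => ?_
    have hle : I n ≤ I (n + 1) :=
      Submodule.span_mono (Set.image_mono fun k hk => Nat.lt_succ_of_lt hk)
    have hmem : x n ∈ I (n + 1) := Submodule.subset_span ⟨n, Nat.lt_succ_self n, rfl⟩
    have hann : I n ≤ LinearMap.ker (LinearMap.mulRight A (y n)) :=
      Submodule.span_le.mpr <| by
        rintro _ ⟨k, hk, rfl⟩
        exact hlt k n hk
    exact lt_of_le_of_ne hle fun h => hne n (hann (h ▸ hmem))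
  exact not_strictMono_of_wellFoundedGT I hI

theorem not_isNoetherianRing_of_commute_of_mul_self_eq_one {A : Type*} [Ring A] (u : ℕ → A)
    (hcomm : Pairwise fun k l => Commute (u k) (u l)) (hsq : ∀ k, u k * u k = 1)
    (hne : ∀ n, ((List.range n).map fun k => 1 + u k).prod * (1 - u n) ≠ 0) :
    ¬ IsNoetherianRing A := by
  set y : ℕ → A := fun n => ((List.range n).map fun k => 1 + u k).prod
  have hy : ∀ n, y (n + 1) = y n * (1 + u n) := fun n => by
    simp [y, List.range_succ]
  have hcomm_y : ∀ n, Commute (1 - u n) (y n) := fun n =>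
    Commute.list_prod_right _ _ fun z hz => by
      obtain ⟨k, hk, rfl⟩ := List.mem_map.mp hz
      exact (Commute.one_left _).sub_left
        ((Commute.one_right _).add_right (hcomm (List.mem_range.mp hk).ne'))
  refine not_isNoetherianRing_of_mul_eq_zero (fun k => 1 - u k) y (fun k n hkn => ?_)
    fun n => (hcomm_y n).eq ▸ hne n
  induction n with
  | zero => omega
  | succ n ih =>
    rw [hy, ← mul_assoc]
    rcases Nat.lt_succ_iff_lt_or_eq.mp hkn with hkn | rfl
    · rw [ih hkn, zero_mul]
    · have hfac : (1 - u k) * (1 + u k) = 0 := by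
        rw [sub_mul, one_mul, mul_add, mul_one, hsq, add_comm (u k), sub_self]
      rw [(hcomm_y k).eq, mul_assoc, hfac, mul_zero]

namespace CliffordAlgebra

variable {R V : Type*} [CommRing R] [AddCommGroup V] [Module R V] {Q : QuadraticForm R V}

theorem contractLeft_mul (d : Module.Dual R V) (x y : CliffordAlgebra Q) :
    contractLeft d (x * y) = contractLeft d x * y + involute x * contractLeft d y := by
  induction x using CliffordAlgebra.induction generalizing y with
  | algebraMap r =>
    rw [← Algebra.smul_def, map_smul, contractLeft_algebraMap, zero_mul, zero_add,
      AlgHom.commutes, ← Algebra.smul_def]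
  | ι v =>
    rw [contractLeft_ι_mul, contractLeft_ι, involute_ι, Algebra.smul_def, neg_mul, sub_eq_add_neg]
  | mul a b ha hb =>
    rw [mul_assoc, ha, hb, ha, map_mul]
    noncomm_ring
  | add a b ha hb =>
    rw [add_mul, map_add, map_add, add_mul, map_add, ha, hb]
    noncomm_ring

theorem contractLeft_mul_of_involute_eq {d : Module.Dual R V} {w : CliffordAlgebra Q}
    (hd : contractLeft d w = 0) (hw : involute w = w) (y : CliffordAlgebra Q) :
    contractLeft d (w * y) = w * contractLeft d y := by
  rw [contractLeft_mul, hd, zero_mul, zero_add, hw]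

theorem contractLeft_list_prod_eq_zero {d : Module.Dual R V} {L : List (CliffordAlgebra Q)}
    (h : ∀ x ∈ L, contractLeft d x = 0) : contractLeft d L.prod = 0 := by
  induction L with
  | nil => exact contractLeft_one (Q := Q) d
  | cons x L ih =>
    rw [List.prod_cons, contractLeft_mul, h x List.mem_cons_self,
      ih fun y hy => h y (List.mem_cons_of_mem x hy), zero_mul, mul_zero, add_zero]

theorem involute_list_prod_eq_self {L : List (CliffordAlgebra Q)} (h : ∀ x ∈ L, involute x = x) :
    involute L.prod = L.prod := by
  rw [map_list_prod, List.map_congr_left h, List.map_id']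

theorem moduleFinite [Invertible (2 : R)] [Module.Free R V] [Module.Finite R V] :
    Module.Finite R (CliffordAlgebra Q) := by
  classical
  let _ : LinearOrder (Module.Free.ChooseBasisIndex R V) := linearOrderOfSTO WellOrderingRel
  have := Module.Finite.of_basis (Module.Free.chooseBasis R V).ExteriorAlgebra
  exact Module.Finite.equiv (CliffordAlgebra.equivExterior Q).symm

end CliffordAlgebra

namespace Cl

open CliffordAlgebra

variable {ι : Type} (P M : Set ι)

lemma cliffordBilin_single_self (i : ι) :
    cliffordBilin P M (Finsupp.single i 1) (Finsupp.single i 1) = cliffordWeight P M i := by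
  simp [cliffordBilin]

lemma cliffordBilin_single_of_ne {i j : ι} (h : i ≠ j) :
    cliffordBilin P M (Finsupp.single i 1) (Finsupp.single j 1) = 0 := by
  simp [cliffordBilin, h.symm]

lemma cliffordQ_single (i : ι) : cliffordQ P M (Finsupp.single i 1) = cliffordWeight P M i := by
  rw [cliffordQ, LinearMap.BilinMap.toQuadraticMap_apply, cliffordBilin_single_self]

lemma polar_cliffordQ_single_of_ne {i j : ι} (h : i ≠ j) :
    QuadraticMap.polar (cliffordQ P M) (Finsupp.single i 1) (Finsupp.single j 1) = 0 := by
  simp only [QuadraticMap.polar, cliffordQ, LinearMap.BilinMap.toQuadraticMap_apply, map_add,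
    LinearMap.add_apply, cliffordBilin_single_of_ne P M h, cliffordBilin_single_of_ne P M h.symm]
  ring

lemma gen_mul_self (i : ι) :
    gen P M i * gen P M i = algebraMap ℝ (Cl P M) (cliffordWeight P M i) := by
  rw [gen, ι_sq_scalar, cliffordQ_single]

lemma gen_mul_gen_of_ne {i j : ι} (h : i ≠ j) :
    gen P M i * gen P M j = -(gen P M j * gen P M i) := by
  rw [gen, gen, ι_mul_ι_comm, polar_cliffordQ_single_of_ne P M h, map_zero, zero_sub]

noncomputable def genProd (l : List ι) : Cl P M := (l.map (gen P M)).prod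

@[simp] lemma genProd_nil : genProd P M [] = 1 := rfl

@[simp] lemma genProd_cons (i : ι) (l : List ι) :
    genProd P M (i :: l) = gen P M i * genProd P M l := List.prod_cons

lemma gen_mul_genProd_of_notMem {i : ι} {l : List ι} (h : i ∉ l) :
    gen P M i * genProd P M l = (-1 : ℝ) ^ l.length • (genProd P M l * gen P M i) := by
  induction l with
  | nil => simp
  | cons j t ih =>
    obtain ⟨hij, hit⟩ := List.ne_and_not_mem_of_not_mem_cons h
    rw [genProd_cons, ← mul_assoc, gen_mul_gen_of_ne P M hij, neg_mul, mul_assoc, ih hit,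
      mul_smul_comm, List.length_cons, pow_succ, mul_neg_one, neg_smul, ← mul_assoc]

lemma involute_genProd (l : List ι) :
    involute (genProd P M l) = (-1 : ℝ) ^ l.length • genProd P M l := by
  induction l with
  | nil => simp
  | cons i t ih =>
    rw [genProd_cons, map_mul, ih, gen, involute_ι, List.length_cons, pow_succ', mul_smul,
      neg_mul, neg_one_smul, mul_smul_comm]

lemma genProd_mul_self {l : List ι} (hl : l.Nodup) :
    genProd P M l * genProd P M l =
      algebraMap ℝ (Cl P M) ((-1) ^ l.length.choose 2 * (l.map (cliffordWeight P M)).prod) := by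
  induction l with
  | nil => simp
  | cons i t ih =>
    obtain ⟨hit, ht⟩ := List.nodup_cons.mp hl
    calc genProd P M (i :: t) * genProd P M (i :: t)
        = ((-1 : ℝ) ^ t.length • (genProd P M t * gen P M i)) * (gen P M i * genProd P M t) := by
          rw [genProd_cons, gen_mul_genProd_of_notMem P M hit]
      _ = ((-1 : ℝ) ^ t.length * cliffordWeight P M i) • (genProd P M t * genProd P M t) := by
          rw [smul_mul_assoc, mul_assoc, ← mul_assoc (gen P M i), gen_mul_self,
            ← Algebra.smul_def, mul_smul_comm, mul_smul]
      _ = _ := by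
          rw [ih ht, Algebra.smul_def, ← map_mul, List.length_cons, Nat.choose_succ_succ',
            Nat.choose_one_right, List.map_cons, List.prod_cons, pow_add]
          ring_nf

lemma commute_genProd {l l' : List ι} (h : l.Disjoint l') (h' : Even l'.length) :
    Commute (genProd P M l) (genProd P M l') :=
  Commute.list_prod_left _ _ fun x hx => by
    obtain ⟨i, hi, rfl⟩ := List.mem_map.mp hx
    rw [Commute, SemiconjBy, gen_mul_genProd_of_notMem P M (h hi), h'.neg_one_pow, one_smul]

lemma contractLeft_gen_mul_self (i : ι) (y : Cl P M) :
    contractLeft (Finsupp.lapply i) (gen P M i * y) =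
      y - gen P M i * contractLeft (Finsupp.lapply i) y := by
  rw [gen, contractLeft_ι_mul]
  simp

lemma contractLeft_gen_mul_of_ne {i j : ι} (h : j ≠ i) (y : Cl P M) :
    contractLeft (Finsupp.lapply i) (gen P M j * y) =
      -(gen P M j * contractLeft (Finsupp.lapply i) y) := by
  rw [gen, contractLeft_ι_mul]
  simp [h]

lemma contractLeft_genProd_of_notMem {i : ι} {l : List ι} (h : i ∉ l) :
    contractLeft (Finsupp.lapply i) (genProd P M l) = 0 := by
  induction l with
  | nil => exact contractLeft_one (Q := cliffordQ P M) _
  | cons j t ih =>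
    obtain ⟨hij, hit⟩ := List.ne_and_not_mem_of_not_mem_cons h
    rw [genProd_cons, contractLeft_gen_mul_of_ne P M (Ne.symm hij), ih hit, mul_zero, neg_zero]

variable {P M}

lemma mul_genProd_ne_zero {w : Cl P M} (hw : w ≠ 0) (hinv : involute w = w) {l : List ι}
    (hl : l.Nodup) (hker : ∀ i ∈ l, contractLeft (Finsupp.lapply i) w = 0) :
    w * genProd P M l ≠ 0 := by
  induction l with
  | nil => simpa using hw
  | cons i t ih =>
    obtain ⟨hit, ht⟩ := List.nodup_cons.mp hl
    intro h
    have : contractLeft (Finsupp.lapply i) (w * genProd P M (i :: t)) = w * genProd P M t := by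
      rw [contractLeft_mul_of_involute_eq (hker i List.mem_cons_self) hinv, genProd_cons,
        contractLeft_gen_mul_self, contractLeft_genProd_of_notMem P M hit, mul_zero, sub_zero]
    exact ih ht (fun j hj => hker j (List.mem_cons_of_mem i hj)) (by rw [← this, h, map_zero])

lemma genProd_ne_zero {l : List ι} (hl : l.Nodup) : genProd P M l ≠ 0 := by
  simpa using mul_genProd_ne_zero one_ne_zero (map_one involute) hl
    fun i _ => contractLeft_one (Q := cliffordQ P M) (Finsupp.lapply i)

lemma mul_one_add_smul_genProd_ne_zero {w : Cl P M} (hw : w ≠ 0) (hinv : involute w = w)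
    {l : List ι} (hl : l.Nodup) (hl₀ : l ≠ [])
    (hker : ∀ i ∈ l, contractLeft (Finsupp.lapply i) w = 0) {c : ℝ} (hc : c ≠ 0) :
    w * (1 + c • genProd P M l) ≠ 0 := by
  obtain ⟨i, t, rfl⟩ := List.exists_cons_of_ne_nil hl₀
  obtain ⟨hit, ht⟩ := List.nodup_cons.mp hl
  intro h
  have : contractLeft (Finsupp.lapply i) (w * (1 + c • genProd P M (i :: t))) =
      c • (w * genProd P M t) := by
    rw [contractLeft_mul_of_involute_eq (hker i List.mem_cons_self) hinv, map_add, map_smul,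
      contractLeft_one, genProd_cons, contractLeft_gen_mul_self,
      contractLeft_genProd_of_notMem P M hit, mul_zero, sub_zero, zero_add, mul_smul_comm]
  have hker' : ∀ j ∈ t, contractLeft (Finsupp.lapply j) w = 0 := fun j hj =>
    hker j (List.mem_cons_of_mem i hj)
  exact smul_ne_zero hc (mul_genProd_ne_zero hw hinv ht hker') (by rw [← this, h, map_zero])

lemma gen_mul_genProd_eq_zero {i : ι} (hi : cliffordWeight P M i = 0) {l : List ι} (hl : i ∈ l) :
    gen P M i * genProd P M l = 0 := by
  induction l with
  | nil => cases hl
  | cons j t ih =>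
    rw [genProd_cons, ← mul_assoc]
    by_cases hij : i = j
    · rw [← hij, gen_mul_self, hi, map_zero, zero_mul]
    · rw [gen_mul_gen_of_ne P M hij, neg_mul, mul_assoc,
        ih ((List.mem_cons.mp hl).resolve_left hij), mul_zero, neg_zero]

theorem not_isNoetherianRing_of_infinite_of_weight_eq_zero {S : Set ι} (hS : S.Infinite)
    (hw : ∀ i ∈ S, cliffordWeight P M i = 0) : ¬ IsNoetherianRing (Cl P M) := by
  set f : ℕ → ι := fun k => hS.natEmbedding S k
  have hf : f.Injective := Subtype.val_injective.comp (hS.natEmbedding S).injective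
  refine not_isNoetherianRing_of_mul_eq_zero (fun k => gen P M (f k))
    (fun n => genProd P M ((List.range n).map f)) (fun k n hkn => ?_) fun n => ?_
  · exact gen_mul_genProd_eq_zero (hw _ (hS.natEmbedding S k).2)
      (List.mem_map_of_mem (List.mem_range.mpr hkn))
  · rw [← genProd_cons]
    refine genProd_ne_zero (List.nodup_cons.mpr ⟨fun h => ?_, List.nodup_range.map hf⟩)
    obtain ⟨k, hk, hkn⟩ := List.mem_map.mp h
    exact (List.mem_range.mp hk).ne (hf hkn)

theorem not_isNoetherianRing_of_blocks (b : ℕ → List ι) (hnodup : ∀ k, (b k).Nodup)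
    (hne : ∀ k, b k ≠ []) (heven : ∀ k, Even (b k).length)
    (hdisj : Pairwise fun k l => (b k).Disjoint (b l))
    (hsq : ∀ k, genProd P M (b k) * genProd P M (b k) = 1) : ¬ IsNoetherianRing (Cl P M) := by
  set u : ℕ → Cl P M := fun k => genProd P M (b k)
  set y : ℕ → Cl P M := fun n => ((List.range n).map fun k => 1 + u k).prod
  have hy : ∀ n, y (n + 1) = y n * (1 + u n) := fun n => by simp [y, List.range_succ]
  have hy_inv : ∀ n, involute (y n) = y n := fun n =>
    involute_list_prod_eq_self fun x hx => by
      obtain ⟨k, -, rfl⟩ := List.mem_map.mp hx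
      rw [map_add, map_one, involute_genProd, (heven k).neg_one_pow, one_smul]
  have hy_ker : ∀ n, ∀ i ∈ b n, contractLeft (Finsupp.lapply i) (y n) = 0 := fun n i hi =>
    contractLeft_list_prod_eq_zero fun x hx => by
      obtain ⟨k, hk, rfl⟩ := List.mem_map.mp hx
      rw [map_add, contractLeft_one, zero_add,
        contractLeft_genProd_of_notMem P M (hdisj (List.mem_range.mp hk).ne' hi)]
  have hy_ne : ∀ n, y n ≠ 0 := by
    intro n
    induction n with
    | zero => exact one_ne_zero
    | succ n ih =>
      rw [hy, ← one_smul ℝ (u n)]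
      exact mul_one_add_smul_genProd_ne_zero ih (hy_inv n) (hnodup n) (hne n) (hy_ker n) one_ne_zero
  refine not_isNoetherianRing_of_commute_of_mul_self_eq_one u
    (fun k l hkl => commute_genProd P M (hdisj hkl) (heven l)) hsq fun n => ?_
  rw [sub_eq_add_neg, ← neg_one_smul ℝ (u n)]
  exact mul_one_add_smul_genProd_ne_zero (hy_ne n) (hy_inv n) (hnodup n) (hne n) (hy_ker n)
    (by norm_num)

theorem not_isNoetherianRing_of_infinite_of_weight_eq {S : Set ι} (hS : S.Infinite) {ε : ℝ}
    (hε : ε ^ 2 = 1) (hw : ∀ i ∈ S, cliffordWeight P M i = ε) : ¬ IsNoetherianRing (Cl P M) := by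
  set g : ℕ → ι := fun k => hS.natEmbedding S k
  have hg : g.Injective := Subtype.val_injective.comp (hS.natEmbedding S).injective
  set b : ℕ → List ι := fun k => List.ofFn fun j : Fin 4 => g (4 * k + j)
  have hnodup : ∀ k, (b k).Nodup := fun k =>
    List.nodup_ofFn.mpr fun j j' h => Fin.ext (by have := hg h; omega)
  refine not_isNoetherianRing_of_blocks b hnodup (fun k => by simp [b])
    (fun k => by simp [b, Nat.even_iff]) (fun k l hkl i hik hil => ?_) fun k => ?_
  · obtain ⟨j, rfl⟩ := List.mem_ofFn.mp hik
    obtain ⟨j', h⟩ := List.mem_ofFn.mp hil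
    have := hg h
    omega
  · rw [genProd_mul_self P M (hnodup k)]
    have hwg : ∀ n, cliffordWeight P M (g n) = ε := fun n => hw _ (hS.natEmbedding S n).2
    simp only [b, List.map_ofFn, List.prod_ofFn, Function.comp_def, hwg, Finset.prod_const,
      Finset.card_univ, Fintype.card_fin, List.length_ofFn]
    rw [show ε ^ 4 = (ε ^ 2) ^ 2 by ring, hε, show Nat.choose 4 2 = 6 from rfl]
    norm_num

end Cl

/-- STATEMENT 11: `C(p,q,z)` is left Noetherian iff `p + q < ∞` and `z < ∞`. -/
theorem noetherian_iff_finite {ι : Type} (P M Z : Set ι)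
    (hPM : Disjoint P M) (hPZ : Disjoint P Z) (hMZ : Disjoint M Z)
    (hU : P ∪ M ∪ Z = Set.univ) :
    IsNoetherianRing (Cl P M) ↔ (P ∪ M).Finite ∧ Z.Finite := by
  refine ⟨fun h => ⟨Set.not_infinite.mp fun hinf => ?_, Set.not_infinite.mp fun hZ => ?_⟩,
    fun ⟨hfin, hZ⟩ => ?_⟩
  · rcases Set.infinite_union.mp hinf with hP | hM
    · exact Cl.not_isNoetherianRing_of_infinite_of_weight_eq hP (one_pow 2)
        (fun i hi => by simp [cliffordWeight, hi]) h
    · exact Cl.not_isNoetherianRing_of_infinite_of_weight_eq hM (ε := -1) (by norm_num)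
        (fun i hi => by simp [cliffordWeight, hi, hPM.notMem_of_mem_right hi]) h
  · exact Cl.not_isNoetherianRing_of_infinite_of_weight_eq_zero hZ (fun i hi => by
      simp [cliffordWeight, hPZ.notMem_of_mem_right hi, hMZ.notMem_of_mem_right hi]) h
  · have : Finite ι := Set.finite_univ_iff.mp (hU ▸ hfin.union hZ)
    have := CliffordAlgebra.moduleFinite (Q := cliffordQ P M)
    exact IsNoetherianRing.of_finite ℝ (Cl P M)
end
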